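/- arXiv:0802.4040 — 7 statements merged into one kernel-verified Lean document; each statement's English description precedes it below -/
import Mathlib

section
/- Let m ≥ 1, let λ₁, …, λ_m > 0 and μ > 0, and let X₁, …, X_m, Y be independent random variables with Xᵢ distributed as EXP(λᵢ) and Y distributed as EXP(μ). Set S₀ = 0 and S_k = X₁ + ⋯ + X_k. Then for every k with 1 ≤ k ≤ m, the probability of the event {S_{k−1} ≤ Y < S_k} equals (μ/(λ_k + μ)) · ∏_{i=1}^{k−1} λᵢ/(λᵢ + μ). -/
/-!
Since `Y` is exponential and independent of `X`, conditionally on `X` the event has probability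
`exp (-μ S_{k-1}) - exp (-μ S_k)`. By independence of the `X i`, the Laplace transform
`E[exp (-μ S_j)]` factorizes into `∏_{i ≤ j} λᵢ / (λᵢ + μ)`, and the difference of two
consecutive such products is the claimed formula.
-/

open MeasureTheory ProbabilityTheory Real Set

namespace ProbabilityTheory

lemma ae_nonneg_expMeasure (r : ℝ) : ∀ᵐ x ∂expMeasure r, 0 ≤ x := by
  have h : expMeasure r (Iio 0) = 0 := by
    rw [expMeasure, gammaMeasure, withDensity_apply _ measurableSet_Iio]
    exact lintegral_gammaPDF_of_nonpos le_rfl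
  filter_upwards [measure_eq_zero_iff_ae_notMem.1 h] with x hx using not_lt.1 hx

lemma expMeasure_singleton (r a : ℝ) : expMeasure r {a} = 0 :=
  withDensity_absolutelyContinuous _ _ (Real.volume_singleton)

lemma expMeasure_Ico {r a b : ℝ} (hr : 0 < r) (ha : 0 ≤ a) (hab : a ≤ b) :
    expMeasure r (Ico a b) = ENNReal.ofReal (exp (-(r * a)) - exp (-(r * b))) := by
  have := isProbabilityMeasure_expMeasure hr
  rw [measure_congr (Ico_ae_eq_Ioc' (expMeasure_singleton r a) (expMeasure_singleton r b)),
    ← measure_cdf (expMeasure r), StieltjesFunction.measure_Ioc, cdf_expMeasure_eq hr,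
    cdf_expMeasure_eq hr, if_pos ha, if_pos (ha.trans hab)]
  ring_nf

lemma lintegral_exp_neg_mul_expMeasure {r μ : ℝ} (hr : 0 < r) (hrμ : 0 < r + μ) :
    ∫⁻ t, ENNReal.ofReal (exp (-(μ * t))) ∂expMeasure r = ENNReal.ofReal (r / (r + μ)) := by
  have hdens : ∀ t, exponentialPDF r t * ENNReal.ofReal (exp (-(μ * t)))
      = ENNReal.ofReal (r / (r + μ)) * exponentialPDF (r + μ) t := by
    intro t
    rcases le_or_gt 0 t with ht | ht
    · rw [exponentialPDF_of_nonneg ht, exponentialPDF_of_nonneg ht,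
        ← ENNReal.ofReal_mul (by positivity), ← ENNReal.ofReal_mul (by positivity)]
      congr 1
      field_simp
      rw [← Real.exp_add]
      ring_nf
    · simp [exponentialPDF_of_neg ht]
  have hpdf : ∀ r, Measurable (exponentialPDF r) :=
    fun r ↦ (measurable_exponentialPDFReal r).ennreal_ofReal
  change ∫⁻ t, _ ∂volume.withDensity (exponentialPDF r) = _
  rw [lintegral_withDensity_eq_lintegral_mul _ (hpdf r) (by fun_prop)]
  simp only [Pi.mul_apply, hdens]
  rw [lintegral_const_mul _ (hpdf _), lintegral_exponentialPDF_eq_one hrμ, mul_one]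

variable {Ω : Type*} [MeasurableSpace Ω] {P : Measure Ω}

lemma iIndepFun.indepFun_of_snoc {β : Type*} [MeasurableSpace β] {n : ℕ} {X : Fin n → Ω → β}
    {Y : Ω → β} (h : iIndepFun (Fin.snoc X Y : Fin (n + 1) → Ω → β) P)
    (hX : ∀ i, Measurable (X i)) (hY : Measurable Y) :
    IndepFun (fun ω i ↦ X i ω) Y P := by
  have hmeas : ∀ i, Measurable ((Fin.snoc X Y : Fin (n + 1) → Ω → β) i) :=
    Fin.lastCases (by simpa using hY) (fun i ↦ by simpa using hX i)
  have hdisj : Disjoint (Finset.univ.map Fin.castSuccEmb) {Fin.last n} := by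
    simp [Fin.castSucc_ne_last]
  have := (h.indepFun_finset _ _ hdisj hmeas).comp
    (φ := fun v (i : Fin n) ↦ v ⟨i.castSucc, Finset.mem_map_of_mem _ (Finset.mem_univ i)⟩)
    (ψ := fun v ↦ v ⟨Fin.last n, Finset.mem_singleton_self _⟩) (by fun_prop)
    (measurable_pi_apply (X := fun _ ↦ β) _)
  simpa [Function.comp_def] using this

lemma iIndepFun.of_snoc {β : Type*} [MeasurableSpace β] {n : ℕ} {X : Fin n → Ω → β}
    {Y : Ω → β} (h : iIndepFun (Fin.snoc X Y : Fin (n + 1) → Ω → β) P) : iIndepFun X P := by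
  simpa using h.precomp (Fin.castSucc_injective n)

lemma IndepFun.measure_mem_eq_lintegral {E F : Type*} [MeasurableSpace E] [MeasurableSpace F]
    [IsFiniteMeasure P] {X : Ω → E} {Y : Ω → F} (h : IndepFun X Y P) (hX : Measurable X)
    (hY : Measurable Y) {B : Set (E × F)} (hB : MeasurableSet B) :
    P {ω | (X ω, Y ω) ∈ B} = ∫⁻ ω, P.map Y {y | (X ω, y) ∈ B} ∂P := by
  change P ((fun ω ↦ (X ω, Y ω)) ⁻¹' B) = _
  rw [← Measure.map_apply (hX.prodMk hY) hB,
    h.map_prod_eq_prod_map_map hX.aemeasurable hY.aemeasurable, Measure.prod_apply hB,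
    lintegral_map (measurable_measure_prodMk_left hB) hX]
  rfl

lemma iIndepFun.lintegral_exp_neg_mul_sum {ι : Type*} {X : ι → Ω → ℝ} (h : iIndepFun X P)
    (hX : ∀ i, Measurable (X i)) (μ : ℝ) (s : Finset ι) :
    ∫⁻ ω, ENNReal.ofReal (exp (-(μ * ∑ i ∈ s, X i ω))) ∂P
      = ∏ i ∈ s, ∫⁻ ω, ENNReal.ofReal (exp (-(μ * X i ω))) ∂P := by
  have hprod : ∀ ω, ENNReal.ofReal (exp (-(μ * ∑ i ∈ s, X i ω)))
      = ∏ i ∈ s, ENNReal.ofReal (exp (-(μ * X i ω))) := fun ω ↦ by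
    rw [← ENNReal.ofReal_prod_of_nonneg fun i _ ↦ (exp_pos _).le, ← exp_sum, Finset.mul_sum,
      Finset.sum_neg_distrib]
  simp_rw [hprod]
  exact lintegral_prod_eq_prod_lintegral_of_indepFun s _
    (h.comp (fun _ t ↦ ENNReal.ofReal (exp (-(μ * t)))) fun _ ↦ by fun_prop) fun i ↦ by fun_prop

lemma lintegral_exp_neg_mul_sum_of_map_eq_expMeasure {ι : Type*} {X : ι → Ω → ℝ}
    (h : iIndepFun X P) (hX : ∀ i, Measurable (X i)) {lam : ι → ℝ} (hlam : ∀ i, 0 < lam i)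
    (hlaw : ∀ i, P.map (X i) = expMeasure (lam i)) {μ : ℝ} (hμ : ∀ i, 0 < lam i + μ)
    (s : Finset ι) :
    ∫⁻ ω, ENNReal.ofReal (exp (-(μ * ∑ i ∈ s, X i ω))) ∂P
      = ENNReal.ofReal (∏ i ∈ s, lam i / (lam i + μ)) := by
  have hfactor : ∀ i, ∫⁻ ω, ENNReal.ofReal (exp (-(μ * X i ω))) ∂P
      = ENNReal.ofReal (lam i / (lam i + μ)) := fun i ↦ by
    rw [← lintegral_exp_neg_mul_expMeasure (hlam i) (hμ i), ← hlaw i,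
      lintegral_map (by fun_prop) (hX i)]
  rw [h.lintegral_exp_neg_mul_sum hX, ENNReal.ofReal_prod_of_nonneg fun i _ ↦
    (div_pos (hlam i) (hμ i)).le]
  exact Finset.prod_congr rfl fun i _ ↦ hfactor i

end ProbabilityTheory

-- Indices are 0-based: the paper's `k` is `k + 1` here, so `S_{k-1}` is a sum over `Iio k`.
theorem prob_partialSum_le_exponential_lt_general
    {Ω : Type*} [MeasurableSpace Ω] (P : Measure Ω) [IsProbabilityMeasure P]
    (m : ℕ) (lam : Fin m → ℝ) (μ : ℝ)
    (hlam : ∀ i, 0 < lam i) (hμ : 0 < μ)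
    (X : Fin m → Ω → ℝ) (Y : Ω → ℝ)
    (hX : ∀ i, Measurable (X i)) (hY : Measurable Y)
    (hindep : iIndepFun (Fin.snoc X Y : Fin (m + 1) → Ω → ℝ) P)
    (hlawX : ∀ i, Measure.map (X i) P = expMeasure (lam i))
    (hlawY : Measure.map Y P = expMeasure μ)
    (k : Fin m) :
    P {ω | (∑ i ∈ Finset.Iio k, X i ω) ≤ Y ω ∧ Y ω < ∑ i ∈ Finset.Iic k, X i ω} =
      ENNReal.ofReal ((μ / (lam k + μ)) * ∏ i ∈ Finset.Iio k, lam i / (lam i + μ)) := by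
  set S : Finset (Fin m) → Ω → ℝ := fun s ω ↦ ∑ i ∈ s, X i ω
  have hlamμ : ∀ i, 0 < lam i + μ := fun i ↦ add_pos (hlam i) hμ
  have hnonneg : ∀ᵐ ω ∂P, ∀ i, 0 ≤ X i ω := ae_all_iff.2 fun i ↦
    ae_of_ae_map (hX i).aemeasurable (hlawX i ▸ ae_nonneg_expMeasure (lam i))
  have hS_mono : ∀ᵐ ω ∂P, 0 ≤ S (Finset.Iio k) ω ∧ S (Finset.Iio k) ω ≤ S (Finset.Iic k) ω :=
    hnonneg.mono fun ω hω ↦ ⟨Finset.sum_nonneg fun i _ ↦ hω i,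
      Finset.sum_le_sum_of_subset_of_nonneg Finset.Iio_subset_Iic_self fun i _ _ ↦ hω i⟩
  have hB : MeasurableSet {p : (Fin m → ℝ) × ℝ |
      ∑ i ∈ Finset.Iio k, p.1 i ≤ p.2 ∧ p.2 < ∑ i ∈ Finset.Iic k, p.1 i} :=
    (measurableSet_le (by fun_prop) measurable_snd).inter
      (measurableSet_lt measurable_snd (by fun_prop))
  calc P {ω | (∑ i ∈ Finset.Iio k, X i ω) ≤ Y ω ∧ Y ω < ∑ i ∈ Finset.Iic k, X i ω}
      = ∫⁻ ω, expMeasure μ (Ico (S (Finset.Iio k) ω) (S (Finset.Iic k) ω)) ∂P := by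
        rw [← hlawY]
        exact (hindep.indepFun_of_snoc hX hY).measure_mem_eq_lintegral
          (measurable_pi_lambda _ hX) hY hB
    _ = ∫⁻ ω, ENNReal.ofReal (exp (-(μ * S (Finset.Iio k) ω)))
          - ENNReal.ofReal (exp (-(μ * S (Finset.Iic k) ω))) ∂P :=
        lintegral_congr_ae (hS_mono.mono fun ω ⟨h0, hle⟩ ↦
          (expMeasure_Ico hμ h0 hle).trans (ENNReal.ofReal_sub _ (exp_pos _).le))
    _ = ENNReal.ofReal (∏ i ∈ Finset.Iio k, lam i / (lam i + μ))
          - ENNReal.ofReal (∏ i ∈ Finset.Iic k, lam i / (lam i + μ)) := by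
        have hlaplace := lintegral_exp_neg_mul_sum_of_map_eq_expMeasure hindep.of_snoc hX hlam
          hlawX hlamμ
        rw [lintegral_sub (by fun_prop) (by rw [hlaplace]; exact ENNReal.ofReal_ne_top)
          (hS_mono.mono fun ω ⟨_, hle⟩ ↦ ENNReal.ofReal_le_ofReal (exp_le_exp.2
            (neg_le_neg (mul_le_mul_of_nonneg_left hle hμ.le)))), hlaplace, hlaplace]
    _ = _ := by
        rw [← ENNReal.ofReal_sub _ (Finset.prod_nonneg fun i _ ↦ (div_pos (hlam i) (hlamμ i)).le),
          Finset.Iic_eq_cons_Iio, Finset.prod_cons]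
        congr 1
        field_simp [(hlamμ k).ne']
        ring

/-- Let `X 0, …, X (m-1), Y` be independent exponential random
variables, `X i` with rate `lam i > 0` and `Y` with rate `μ > 0`.  With partial sums
`S k = X 0 + ⋯ + X (k-1)`, for every `k` (`1 ≤ k ≤ m`, here encoded by `k : Fin m`,
with `S (k-1) = ∑ i < k, X i` and `S k = ∑ i ≤ k, X i`) the probability of the event
`{S (k-1) ≤ Y < S k}` equals `(μ / (lam k + μ)) · ∏_{i<k} lam i / (lam i + μ)`. -/
theorem prob_partialSum_le_exponential_lt
    {Ω : Type*} [MeasurableSpace Ω] (P : Measure Ω) [IsProbabilityMeasure P]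
    (m : ℕ) (hm : 1 ≤ m) (lam : Fin m → ℝ) (μ : ℝ)
    (hlam : ∀ i, 0 < lam i) (hμ : 0 < μ)
    (X : Fin m → Ω → ℝ) (Y : Ω → ℝ)
    (hX : ∀ i, Measurable (X i)) (hY : Measurable Y)
    (hindep : iIndepFun (Fin.snoc X Y : Fin (m + 1) → Ω → ℝ) P)
    (hlawX : ∀ i, Measure.map (X i) P = expMeasure (lam i))
    (hlawY : Measure.map Y P = expMeasure μ)
    (k : Fin m) :
    P {ω | (∑ i ∈ Finset.Iio k, X i ω) ≤ Y ω ∧ Y ω < ∑ i ∈ Finset.Iic k, X i ω} =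
      ENNReal.ofReal ((μ / (lam k + μ)) * ∏ i ∈ Finset.Iio k, lam i / (lam i + μ)) :=
  prob_partialSum_le_exponential_lt_general P m lam μ hlam hμ X Y hX hY hindep hlawX hlawY k
end

section
/- Fix an integer n ≥ 2 and define a sequence λ : ℤ → ℕ by λ(t) = 1 for all t ≤ 0 and λ(t+1) = λ(t) + λ(2t − n + 1) for all t with 0 ≤ t < n − 1. Define F : ℕ → ℕ by F(1) = 1 and F(m) = F(m−1) + F(⌊m/2⌋) for m ≥ 2. Then λ(n−1) = F(n). -/
/-!
Putting `u (x) = λ (n - x)`, the recursion becomes `u x = u (x + 1) + u (2x + 1)` for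
`1 ≤ x < n`, with `u x = 1` for `x ≥ n`: `u x` counts the walks from `x` under the moves
`x ↦ x + 1`, `x ↦ 2x + 1` that stop on reaching `n`, and `λ (n - 1) = u 1`.
Raising the threshold from `n - 1` to `n` adds the walks that end exactly at `n - 1`.
From `⌊n/2⌋` on, the only move that stays below `n` is `x ↦ x + 1`, so these walks are
counted by the walks with threshold `⌊n/2⌋`. Hence the walk counts satisfy the recursion
of `F` in the threshold.
-/

/-- The Fibonacci-like sequence `F(1) = 1`, `F(m) = F(m-1) + F(⌊m/2⌋)` for `m ≥ 2`
(OEIS A033485); the value at `0` is junk. -/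
def fibKK : ℕ → ℕ
  | 0 => 0
  | 1 => 1
  | (m + 2) => fibKK (m + 1) + fibKK ((m + 2) / 2)
decreasing_by all_goals omega

lemma fibKK_of_two_le {m : ℕ} (hm : 2 ≤ m) : fibKK m = fibKK (m - 1) + fibKK (m / 2) := by
  obtain ⟨k, rfl⟩ := Nat.exists_eq_add_of_le' hm
  rw [fibKK]
  rfl

def walkCount (n x : ℕ) : ℕ :=
  if n ≤ x then 1 else walkCount n (x + 1) + walkCount n (2 * x + 1)
termination_by n - x

lemma walkCount_of_le {n x : ℕ} (h : n ≤ x) : walkCount n x = 1 := by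
  rw [walkCount, if_pos h]

lemma walkCount_of_lt {n x : ℕ} (h : x < n) :
    walkCount n x = walkCount n (x + 1) + walkCount n (2 * x + 1) := by
  rw [walkCount, if_neg (Nat.not_le.mpr h)]

theorem walkCount_eq_pred_add_half {n x : ℕ} (hn : 2 ≤ n) (hx : x < n) :
    walkCount n x = walkCount (n - 1) x + walkCount (n / 2) x := by
  rcases (show x = n - 1 ∨ x < n - 1 by omega) with rfl | hx'
  · rw [walkCount_of_lt hx, walkCount_of_le (show n ≤ n - 1 + 1 by omega),
      walkCount_of_le (show n ≤ 2 * (n - 1) + 1 by omega), walkCount_of_le le_rfl,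
      walkCount_of_le (show n / 2 ≤ n - 1 by omega)]
  rw [walkCount_of_lt hx, walkCount_of_lt hx',
    walkCount_eq_pred_add_half hn (x := x + 1) (by omega)]
  by_cases hhalf : x < n / 2
  · rw [walkCount_eq_pred_add_half hn (x := 2 * x + 1) (by omega), walkCount_of_lt hhalf]
    ring
  · rw [walkCount_of_le (show n ≤ 2 * x + 1 by omega),
      walkCount_of_le (show n - 1 ≤ 2 * x + 1 by omega), walkCount_of_le (not_lt.mp hhalf),
      walkCount_of_le (show n / 2 ≤ x + 1 by omega)]
termination_by n - x

theorem walkCount_one_eq_fibKK {n : ℕ} (hn : 1 ≤ n) : walkCount n 1 = fibKK n := by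
  induction n using Nat.strong_induction_on with
  | _ n ih =>
    rcases (show n = 1 ∨ 2 ≤ n by omega) with rfl | hn2
    · rw [walkCount_of_le le_rfl, fibKK]
    · rw [walkCount_eq_pred_add_half hn2 (by omega), ih (n - 1) (by omega) (by omega),
        ih (n / 2) (by omega) (by omega), fibKK_of_two_le hn2]

theorem lam_sub_eq_walkCount {n : ℕ} {lam : ℤ → ℕ} (h0 : ∀ t : ℤ, t ≤ 0 → lam t = 1)
    (hrec : ∀ t : ℤ, 0 ≤ t → t < (n : ℤ) - 1 →
      lam (t + 1) = lam t + lam (2 * t - n + 1))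
    {x : ℕ} (hx : 1 ≤ x) : lam (n - x) = walkCount n x := by
  rcases le_or_gt n x with hnx | hxn
  · rw [h0 _ (by omega), walkCount_of_le hnx]
  have hstep := hrec (n - x - 1) (by omega) (by omega)
  rw [show (n : ℤ) - x - 1 + 1 = n - x by ring,
    show 2 * ((n : ℤ) - x - 1) - n + 1 = n - (2 * x + 1 : ℕ) by push_cast; ring] at hstep
  rw [hstep, walkCount_of_lt hxn, ← lam_sub_eq_walkCount h0 hrec (x := x + 1) (by omega),
    ← lam_sub_eq_walkCount h0 hrec (x := 2 * x + 1) (by omega)]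
  push_cast
  ring_nf
termination_by n - x

/-- Fix `n ≥ 2` and let `lam : ℤ → ℕ` satisfy `lam t = 1` for all
`t ≤ 0` and `lam (t+1) = lam t + lam (2t - n + 1)` for `0 ≤ t < n - 1`.
Then `lam (n-1) = F n` where `F` is the Fibonacci-like sequence A033485. -/
theorem lam_final_eq_fibKK (n : ℕ) (hn : 2 ≤ n) (lam : ℤ → ℕ)
    (h0 : ∀ t : ℤ, t ≤ 0 → lam t = 1)
    (hrec : ∀ t : ℤ, 0 ≤ t → t < (n : ℤ) - 1 → lam (t + 1) = lam t + lam (2 * t - n + 1)) :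
    lam ((n : ℤ) - 1) = fibKK n := by
  have h := lam_sub_eq_walkCount h0 hrec (x := 1) le_rfl
  rw [Nat.cast_one] at h
  rw [h, walkCount_one_eq_fibKK (by omega)]
end

section
/- Let F be defined by F(1) = 1 and F(m) = F(m−1) + F(⌊m/2⌋) for m ≥ 2, and let g be the formal power series g(z) = Σ_{n≥1} F(n) zⁿ over ℚ. Then g satisfies the functional equation g(z)·(1 − z) = z + (1 + z)·g(z²), where g(z²) denotes the formal power series obtained by substituting z² for z in g. -/
/-- The generating function `g(z) = Σ_{n ≥ 1} F(n) zⁿ` of the Fibonacci-like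
sequence, as a formal power series over `ℚ` (the coefficient of `z⁰` is `F(0) = 0`). -/
noncomputable def genF : PowerSeries ℚ :=
  PowerSeries.mk fun n => (fibKK n : ℚ)

/-- The power series `g(z²)`, obtained from `genF` by substituting `z²` for `z`:
its `z^n`-coefficient is `F(n/2)` for even `n` and `0` for odd `n`. -/
noncomputable def genFsq : PowerSeries ℚ :=
  PowerSeries.mk fun n => if n % 2 = 0 then (fibKK (n / 2) : ℚ) else 0

/-! Compare the coefficients of `z^(n+1)`: the left side gives `F(n+1) - F(n)`, while of the two
consecutive coefficients of `g(z²)` picked up by `1 + z` exactly one is nonzero, namely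
`F(⌊(n+1)/2⌋)`; the recursion (with the junk value `F(0) = 0` absorbing `n = 0` into the
`z` term) makes these agree. -/

open PowerSeries

lemma fibKK_succ (n : ℕ) :
    fibKK (n + 1) = fibKK n + fibKK ((n + 1) / 2) + if n = 0 then 1 else 0 := by
  rcases n with _ | n
  · simp [fibKK]
  · rw [fibKK, if_neg n.succ_ne_zero, add_zero]

lemma coeff_genFsq_add_coeff_genFsq_succ (n : ℕ) :
    coeff n genFsq + coeff (n + 1) genFsq = fibKK ((n + 1) / 2) := by
  simp only [genFsq, coeff_mk]
  rcases Nat.even_or_odd' n with ⟨k, rfl | rfl⟩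
  · have hk : (2 * k + 1) / 2 = k := by omega
    simp [hk]
  · have hk : (2 * k + 1 + 1) / 2 = k + 1 := by omega
    have hodd : (2 * k + 1) % 2 = 1 := by omega
    have heven : (2 * k + 1 + 1) % 2 = 0 := by omega
    simp [hk, hodd, heven]

/-- The generating function `g(z) = Σ_{n≥1} F(n) zⁿ` of the
Fibonacci-like sequence A033485 satisfies the functional equation
`g(z)·(1 − z) = z + (1 + z)·g(z²)`. -/
theorem genF_functional_equation :
    genF * (1 - PowerSeries.X) = PowerSeries.X + (1 + PowerSeries.X) * genFsq := by
  ext n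
  rcases n with _ | n
  · simp [genF, genFsq, fibKK]
  · have hF := congrArg (fun m : ℕ => (m : ℚ)) (fibKK_succ n)
    have hsq := coeff_genFsq_add_coeff_genFsq_succ n
    simp only [mul_sub, mul_one, add_mul, one_mul, map_sub, map_add, coeff_succ_mul_X,
      coeff_succ_X_mul, coeff_X, add_eq_right]
    simp only [genF, coeff_mk] at hF ⊢
    push_cast at hF
    split_ifs at hF ⊢ <;> linarith
end

section
/- Fix a real number n > 0. For each integer k ≥ 0 define γ_k : ℝ → ℝ by γ_k(s) = Σ_{j=0}^{k} (n^j / (j! · 2^{j(j−1)/2})) · (2^{j−1} s − 2^{j−1} + 1)^j. Then γ₀(s) = 1 for all s, and for every k ≥ 0 and every real s, γ_{k+1}(s) = γ_k(1 − 2^{−k}) + n · ∫_{1−2^{−k}}^{s} γ_k(2ξ − 1) dξ. -/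
open scoped Nat

/-!
Write `γ_k = Σ_{j ≤ k} c_j · (2^{j-1}(s - 1) + 1)^j`. Substituting `2ξ - 1` turns the `j`-th
base into the `(j+1)`-st, and `c_{j+1} · (j+1) · 2^j = n · c_j`, so `γ_{k+1}' (s) = n · γ_k(2s - 1)`.
The top term of `γ_{k+1}` vanishes at `1 - 2^{-k}`, so there `γ_{k+1} = γ_k`, and the recursion is
the fundamental theorem of calculus.
-/

noncomputable section

namespace GammaK

variable (n : ℝ)

def coeff (j : ℕ) : ℝ := n ^ j / ((j ! : ℝ) * 2 ^ (j * (j - 1) / 2))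

def term (j : ℕ) (x : ℝ) : ℝ := coeff n j * ((2 : ℝ) ^ (j - 1) * x - (2 : ℝ) ^ (j - 1) + 1) ^ j

def gamma (k : ℕ) (x : ℝ) : ℝ := ∑ j ∈ Finset.range (k + 1), term n j x

theorem coeff_succ_mul (j : ℕ) : coeff n (j + 1) * ((j + 1) * 2 ^ j) = n * coeff n j := by
  simp only [coeff, Nat.triangle_succ, pow_add, Nat.factorial_succ, Nat.cast_mul, Nat.cast_succ]
  field_simp

theorem term_zero (x : ℝ) : term n 0 x = 1 := by
  simp [term, coeff]

theorem term_succ (j : ℕ) (x : ℝ) :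
    term n (j + 1) x = coeff n (j + 1) * ((2 : ℝ) ^ j * x - 2 ^ j + 1) ^ (j + 1) := by
  simp only [term, Nat.add_sub_cancel]

/-- For `j = 0` the two bases differ, but they are raised to the power `0`. -/
theorem term_two_mul_sub_one (j : ℕ) (x : ℝ) :
    term n j (2 * x - 1) = coeff n j * ((2 : ℝ) ^ j * x - 2 ^ j + 1) ^ j := by
  cases j with
  | zero => simp [term]
  | succ j => rw [term_succ, pow_succ]; ring_nf

theorem hasDerivAt_term_succ (j : ℕ) (x : ℝ) :
    HasDerivAt (term n (j + 1)) (n * term n j (2 * x - 1)) x := by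
  have hbase : HasDerivAt (fun x : ℝ => (2 : ℝ) ^ j * x - 2 ^ j + 1) (2 ^ j) x := by
    simpa using ((hasDerivAt_id x).const_mul ((2 : ℝ) ^ j)).sub_const (2 ^ j) |>.add_const 1
  rw [funext (term_succ n j)]
  refine ((hbase.fun_pow (j + 1)).const_mul (coeff n (j + 1))).congr_deriv ?_
  rw [term_two_mul_sub_one, Nat.add_sub_cancel]
  push_cast
  linear_combination ((2 : ℝ) ^ j * x - 2 ^ j + 1) ^ j * coeff_succ_mul n j

theorem continuous_gamma (k : ℕ) : Continuous (gamma n k) := by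
  unfold gamma term
  fun_prop

theorem hasDerivAt_gamma_succ (k : ℕ) (x : ℝ) :
    HasDerivAt (gamma n (k + 1)) (n * gamma n k (2 * x - 1)) x := by
  have hsum := HasDerivAt.fun_sum (u := Finset.range (k + 1))
    (fun j _ => hasDerivAt_term_succ n j x)
  have hgamma : gamma n (k + 1) = fun y => ∑ j ∈ Finset.range (k + 1), term n (j + 1) y + 1 := by
    funext y
    rw [gamma, Finset.sum_range_succ', term_zero]
  rw [hgamma, gamma, Finset.mul_sum]
  exact hsum.add_const 1

theorem term_succ_one_sub_two_zpow (k : ℕ) : term n (k + 1) (1 - (2 : ℝ) ^ (-(k : ℤ))) = 0 := by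
  have hbase : (2 : ℝ) ^ k * (1 - 2 ^ (-(k : ℤ))) - 2 ^ k + 1 = 0 := by
    rw [zpow_neg, zpow_natCast]
    field_simp
    ring
  rw [term_succ, hbase, zero_pow k.succ_ne_zero, mul_zero]

theorem gamma_succ_one_sub_two_zpow (k : ℕ) :
    gamma n (k + 1) (1 - (2 : ℝ) ^ (-(k : ℤ))) = gamma n k (1 - (2 : ℝ) ^ (-(k : ℤ))) := by
  rw [gamma, Finset.sum_range_succ, term_succ_one_sub_two_zpow, add_zero, gamma]

end GammaK

end

open GammaK in
theorem gammaK_recursion_general (n : ℝ) (γ : ℕ → ℝ → ℝ)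
    (hγ : ∀ k s, γ k s = ∑ j ∈ Finset.range (k + 1),
      n ^ j / ((j ! : ℝ) * 2 ^ (j * (j - 1) / 2)) *
        ((2 : ℝ) ^ (j - 1) * s - (2 : ℝ) ^ (j - 1) + 1) ^ j) :
    (∀ s : ℝ, γ 0 s = 1) ∧
    ∀ (k : ℕ) (s : ℝ),
      γ (k + 1) s = γ k (1 - (2 : ℝ) ^ (-(k : ℤ))) +
        n * ∫ ξ in (1 - (2 : ℝ) ^ (-(k : ℤ)))..s, γ k (2 * ξ - 1) := by
  obtain rfl : γ = gamma n := funext₂ hγ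
  refine ⟨fun s => by simp [gamma, term_zero], fun k s => ?_⟩
  have hint : IntervalIntegrable (fun ξ => n * gamma n k (2 * ξ - 1)) MeasureTheory.volume
      (1 - (2 : ℝ) ^ (-(k : ℤ))) s :=
    (continuous_const.mul ((continuous_gamma n k).comp (by fun_prop))).intervalIntegrable _ _
  rw [← intervalIntegral.integral_const_mul,
    intervalIntegral.integral_eq_sub_of_hasDerivAt (fun x _ => hasDerivAt_gamma_succ n k x) hint,
    gamma_succ_one_sub_two_zpow]
  ring

/-- Fix a real `n > 0` and for `k ≥ 0` let
`γ_k(s) = Σ_{j=0}^{k} (n^j / (j!·2^{j(j−1)/2})) · (2^{j−1} s − 2^{j−1} + 1)^j`.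
Then `γ₀ ≡ 1` and `γ_{k+1}(s) = γ_k(1 − 2^{−k}) + n·∫_{1−2^{−k}}^{s} γ_k(2ξ − 1) dξ`. -/
theorem gammaK_recursion (n : ℝ) (hn : 0 < n) (γ : ℕ → ℝ → ℝ)
    (hγ : ∀ k s, γ k s = ∑ j ∈ Finset.range (k + 1),
      n ^ j / ((j ! : ℝ) * 2 ^ (j * (j - 1) / 2)) *
        ((2 : ℝ) ^ (j - 1) * s - (2 : ℝ) ^ (j - 1) + 1) ^ j) :
    (∀ s : ℝ, γ 0 s = 1) ∧
    ∀ (k : ℕ) (s : ℝ),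
      γ (k + 1) s = γ k (1 - (2 : ℝ) ^ (-(k : ℤ))) +
        n * ∫ ξ in (1 - (2 : ℝ) ^ (-(k : ℤ)))..s, γ k (2 * ξ - 1) :=
  gammaK_recursion_general n γ hγ
end

section
/- Fix a real number n > 0. For each integer k ≥ 0 define γ_k : ℝ → ℝ by γ_k(s) = Σ_{j=0}^{k} (n^j / (j! · 2^{j(j−1)/2})) · (2^{j−1} s − 2^{j−1} + 1)^j. Then lim_{k→∞} γ_k(1 − 2^{−k}) = Σ_{j=0}^{∞} n^j / (j! · 2^{j(j−1)/2}), where the series on the right converges. -/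
/-!
At `s = 1 - 2⁻ᵏ` the `j`-th term of `γ_k` is `aⱼ (1 - 2^(j-1-k))^j` with
`aⱼ = n^j / (j! 2^(j(j-1)/2))`. For `j ≤ k` the factor `(1 - 2^(j-1-k))^j` lies in `[0, 1]` and
it tends to `1` as `k → ∞`, while `|aⱼ| ≤ |n|^j / j!` is summable; Tannery's theorem
(dominated convergence for series) gives the limit.
-/

open scoped Nat
open Filter Topology Finset

lemma tendsto_sum_range_succ_of_dominated {G : Type*} [NormedAddCommGroup G] [CompleteSpace G]
    {f : ℕ → ℕ → G} {g : ℕ → G} {bound : ℕ → ℝ} (h_sum : Summable bound)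
    (hlim : ∀ j, Tendsto (f · j) atTop (𝓝 (g j)))
    (h_bound : ∀ k j, j ≤ k → ‖f k j‖ ≤ bound j) :
    Tendsto (fun k => ∑ j ∈ range (k + 1), f k j) atTop (𝓝 (∑' j, g j)) := by
  rw [funext fun k => sum_eq_tsum_indicator (f k) (range (k + 1))]
  refine tendsto_tsum_of_dominated_convergence h_sum (fun j => ?_) (.of_forall fun k j => ?_)
  · refine (hlim j).congr' ?_
    filter_upwards [eventually_ge_atTop j] with k hk
    simp [Nat.lt_succ_of_le hk]
  · by_cases hjk : j ≤ k
    · simpa [Nat.lt_succ_of_le hjk] using h_bound k j hjk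
    · simpa [Set.indicator_of_notMem, hjk, Nat.lt_succ_iff] using
        (norm_nonneg _).trans (h_bound j j le_rfl)

lemma summable_pow_div_factorial_mul_two_pow (x : ℝ) :
    Summable (fun j : ℕ => x ^ j / ((j ! : ℝ) * 2 ^ (j * (j - 1) / 2))) := by
  refine (Real.summable_pow_div_factorial |x|).of_norm_bounded fun j => ?_
  rw [norm_div, norm_pow, Real.norm_eq_abs, norm_mul, Real.norm_natCast, norm_pow,
    Real.norm_two]
  gcongr
  exact le_mul_of_one_le_right (by positivity) (one_le_pow₀ one_le_two)

lemma one_sub_two_pow_mul_zpow_neg_mem_Icc {i k : ℕ} (hik : i ≤ k) :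
    1 - (2 : ℝ) ^ i * 2 ^ (-(k : ℤ)) ∈ Set.Icc 0 1 := by
  have h : (2 : ℝ) ^ i * 2 ^ (-(k : ℤ)) = 2 ^ ((i : ℤ) - k) := by
    rw [sub_eq_add_neg, zpow_add₀ two_ne_zero, zpow_natCast]
  rw [h]
  constructor
  · linarith [zpow_le_one_of_nonpos₀ (one_le_two (α := ℝ)) (by omega : (i : ℤ) - k ≤ 0)]
  · linarith [zpow_pos (two_pos (α := ℝ)) ((i : ℤ) - k)]

lemma tendsto_one_sub_mul_zpow_neg_pow (c : ℝ) (j : ℕ) :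
    Tendsto (fun k : ℕ => (1 - c * (2 : ℝ) ^ (-(k : ℤ))) ^ j) atTop (𝓝 1) := by
  have h : Tendsto (fun k : ℕ => (2 : ℝ) ^ (-(k : ℤ))) atTop (𝓝 0) := by
    simpa [zpow_neg, zpow_natCast, ← inv_pow] using
      tendsto_pow_atTop_nhds_zero_of_lt_one (by norm_num : (0 : ℝ) ≤ 2⁻¹) (by norm_num)
  simpa using ((h.const_mul c).const_sub 1).pow j

theorem gammaK_tendsto_series_general (n : ℝ) (γ : ℕ → ℝ → ℝ)
    (hγ : ∀ k s, γ k s = ∑ j ∈ Finset.range (k + 1),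
      n ^ j / ((j ! : ℝ) * 2 ^ (j * (j - 1) / 2)) *
        ((2 : ℝ) ^ (j - 1) * s - (2 : ℝ) ^ (j - 1) + 1) ^ j) :
    Summable (fun j : ℕ => n ^ j / ((j ! : ℝ) * 2 ^ (j * (j - 1) / 2))) ∧
    Tendsto (fun k : ℕ => γ k (1 - (2 : ℝ) ^ (-(k : ℤ)))) atTop
      (nhds (∑' j : ℕ, n ^ j / ((j ! : ℝ) * 2 ^ (j * (j - 1) / 2)))) := by
  set a : ℕ → ℝ := fun j => n ^ j / ((j ! : ℝ) * 2 ^ (j * (j - 1) / 2))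
  have ha : Summable a := summable_pow_div_factorial_mul_two_pow n
  have hγ_at : ∀ k : ℕ, γ k (1 - (2 : ℝ) ^ (-(k : ℤ))) =
      ∑ j ∈ range (k + 1), a j * (1 - 2 ^ (j - 1) * (2 : ℝ) ^ (-(k : ℤ))) ^ j := fun k => by
    rw [hγ]
    exact sum_congr rfl fun j _ => by ring
  refine ⟨ha, ?_⟩
  simp_rw [hγ_at]
  refine tendsto_sum_range_succ_of_dominated ha.abs
    (fun j => by simpa using (tendsto_one_sub_mul_zpow_neg_pow _ j).const_mul (a j))
    fun k j hjk => ?_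
  obtain ⟨h0, h1⟩ := one_sub_two_pow_mul_zpow_neg_mem_Icc (i := j - 1) (k := k) (by omega)
  rw [norm_mul, norm_pow, Real.norm_of_nonneg h0]
  exact mul_le_of_le_one_right (abs_nonneg _) (pow_le_one₀ h0 h1)

/-- Fix a real `n > 0` and for `k ≥ 0` let
`γ_k(s) = Σ_{j=0}^{k} (n^j / (j!·2^{j(j−1)/2})) · (2^{j−1} s − 2^{j−1} + 1)^j`.
Then the series `Σ_{j≥0} n^j / (j!·2^{j(j−1)/2})` converges and
`γ_k(1 − 2^{−k}) → Σ_{j=0}^{∞} n^j / (j!·2^{j(j−1)/2})` as `k → ∞`. -/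
theorem gammaK_tendsto_series (n : ℝ) (hn : 0 < n) (γ : ℕ → ℝ → ℝ)
    (hγ : ∀ k s, γ k s = ∑ j ∈ Finset.range (k + 1),
      n ^ j / ((j ! : ℝ) * 2 ^ (j * (j - 1) / 2)) *
        ((2 : ℝ) ^ (j - 1) * s - (2 : ℝ) ^ (j - 1) + 1) ^ j) :
    Summable (fun j : ℕ => n ^ j / ((j ! : ℝ) * 2 ^ (j * (j - 1) / 2))) ∧
    Tendsto (fun k : ℕ => γ k (1 - (2 : ℝ) ^ (-(k : ℤ)))) atTop
      (nhds (∑' j : ℕ, n ^ j / ((j ! : ℝ) * 2 ^ (j * (j - 1) / 2)))) :=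
  gammaK_tendsto_series_general n γ hγ
end

section
/- Let f(x) = Σ_{j=0}^{∞} x^j / (j! · 2^{j(j−1)/2}). Then lim_{n→∞} (ln f(n)) / (ln n)² = 1/(2 ln 2), where the limit is taken as the real variable n tends to infinity. -/
/-!
Write `c = log q` and `L = log x`. Since `j * M ≤ C(j, 2) + C(M + 1, 2)`, every term of the series
is at most `q ^ C(M + 1, 2) * (x / q ^ M) ^ j / j!`, so choosing `q ^ M ≥ x`, i.e. `M = ⌈L / c⌉`,
gives `log f(x) ≤ c * C(M + 1, 2) + 1 ≈ L² / (2c)`. Conversely the single term with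
`m = ⌊L / c⌋` already has logarithm `m L - log m! - c C(m, 2) ≥ m (L / 2 - log m) ≈ L² / (2c)`.
-/

open scoped Nat
open Filter Real Topology

noncomputable def deformedExpTerm (q x : ℝ) (j : ℕ) : ℝ := x ^ j / (j ! * q ^ j.choose 2)

noncomputable def deformedExp (q x : ℝ) : ℝ := ∑' j, deformedExpTerm q x j

lemma mul_le_choose_two_add_choose_two (j M : ℕ) : j * M ≤ j.choose 2 + (M + 1).choose 2 := by
  -- `C(j, 2) + C(M + 1, 2) - j M = (j - M)(j - M - 1) / 2`
  have hsq : 0 ≤ ((j : ℝ) - M) * ((j : ℝ) - M - 1) := by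
    rcases le_or_gt j M with h | h
    · have : (j : ℝ) ≤ M := by exact_mod_cast h
      nlinarith
    · have : (M : ℝ) + 1 ≤ j := by exact_mod_cast h
      nlinarith
  have : (j * M : ℝ) ≤ j.choose 2 + (M + 1).choose 2 := by
    rw [Nat.cast_choose_two, Nat.cast_choose_two]
    push_cast
    nlinarith
  exact_mod_cast this

section

variable {q : ℝ}

lemma deformedExpTerm_nonneg (hq : 0 ≤ q) {x : ℝ} (hx : 0 ≤ x) (j : ℕ) :
    0 ≤ deformedExpTerm q x j := by
  unfold deformedExpTerm; positivity

lemma summable_deformedExpTerm (hq : 1 ≤ q) (x : ℝ) : Summable (deformedExpTerm q x) := by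
  refine (Real.summable_pow_div_factorial |x|).of_norm_bounded fun j => ?_
  rw [deformedExpTerm, norm_div, norm_pow, Real.norm_eq_abs, Real.norm_of_nonneg (by positivity)]
  exact div_le_div_of_nonneg_left (by positivity) (by positivity)
    (le_mul_of_one_le_right (by positivity) (one_le_pow₀ hq))

lemma deformedExpTerm_le_deformedExp (hq : 1 ≤ q) {x : ℝ} (hx : 0 ≤ x) (j : ℕ) :
    deformedExpTerm q x j ≤ deformedExp q x :=
  (summable_deformedExpTerm hq x).le_tsum j fun i _ => deformedExpTerm_nonneg (by linarith) hx i

lemma one_le_deformedExp (hq : 1 ≤ q) {x : ℝ} (hx : 0 ≤ x) : 1 ≤ deformedExp q x := by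
  simpa [deformedExpTerm] using deformedExpTerm_le_deformedExp hq hx 0

lemma deformedExpTerm_le_pow_mul (hq : 1 ≤ q) {x : ℝ} (hx : 0 ≤ x) (M j : ℕ) :
    deformedExpTerm q x j ≤ q ^ (M + 1).choose 2 * ((x / q ^ M) ^ j / j !) := by
  have hq0 : 0 < q := by linarith
  calc deformedExpTerm q x j = (x / q ^ M) ^ j / j ! * ((q ^ M) ^ j / q ^ j.choose 2) := by
        unfold deformedExpTerm; field_simp
        rw [div_pow, div_mul_cancel₀ _ (by positivity)]
    _ ≤ (x / q ^ M) ^ j / j ! * q ^ (M + 1).choose 2 := by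
        gcongr
        rw [div_le_iff₀ (by positivity), ← pow_mul, ← pow_add, mul_comm M]
        exact pow_le_pow_right₀ hq (by linarith [mul_le_choose_two_add_choose_two j M])
    _ = _ := mul_comm _ _

lemma deformedExp_le_pow_mul_exp (hq : 1 ≤ q) {x : ℝ} (hx : 0 ≤ x) (M : ℕ) :
    deformedExp q x ≤ q ^ (M + 1).choose 2 * exp (x / q ^ M) := by
  have hexp : HasSum (fun j : ℕ => (x / q ^ M) ^ j / j !) (exp (x / q ^ M)) := by
    simpa [Real.exp_eq_exp_ℝ] using NormedSpace.expSeries_div_hasSum_exp (x / q ^ M)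
  exact hasSum_le (deformedExpTerm_le_pow_mul hq hx M)
    (summable_deformedExpTerm hq x).hasSum (hexp.mul_left _)

lemma log_deformedExp_exp_le (hq : 1 < q) (L : ℝ) :
    log (deformedExp q (exp L)) ≤
      log q * ((⌈L / log q⌉₊ + 1) * ⌈L / log q⌉₊ / 2) + 1 := by
  set M := ⌈L / log q⌉₊
  have hc : 0 < log q := log_pos hq
  have hLM : exp L ≤ q ^ M := by
    rw [← rpow_natCast, rpow_def_of_pos (by linarith)]
    exact exp_le_exp.mpr (by rw [mul_comm, ← div_le_iff₀ hc]; exact Nat.le_ceil _)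
  have hbound := deformedExp_le_pow_mul_exp hq.le (exp_pos L).le M
  have hpos := zero_lt_one.trans_le (one_le_deformedExp hq.le (exp_pos L).le)
  calc log (deformedExp q (exp L))
      ≤ log (q ^ (M + 1).choose 2 * exp (exp L / q ^ M)) := log_le_log hpos hbound
    _ = log q * ((M + 1) * M / 2) + exp L / q ^ M := by
        rw [log_mul (by positivity) (exp_pos _).ne', log_pow, log_exp, Nat.cast_choose_two]
        push_cast; ring
    _ ≤ _ := by gcongr; exact div_le_one_of_le₀ hLM (by positivity)

lemma le_log_deformedExpTerm_exp (hq : 1 ≤ q) {L : ℝ} {m : ℕ} (hm : m * log q ≤ L) :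
    m * (L / 2 - log m) ≤ log (deformedExpTerm q (exp L) m) := by
  have hc : 0 ≤ log q := log_nonneg hq
  have hfact : log (m ! : ℝ) ≤ m * log m := by
    rw [← log_pow]
    exact log_le_log (by positivity) (by exact_mod_cast Nat.factorial_le_pow m)
  have hchoose : (m.choose 2 : ℝ) * log q ≤ m * L / 2 := by
    rw [Nat.cast_choose_two]
    nlinarith [m.cast_nonneg (α := ℝ)]
  rw [deformedExpTerm, log_div (by positivity) (by positivity), log_mul (by positivity)
    (by positivity), log_pow, log_pow, log_exp]
  linarith

lemma le_log_deformedExp_exp (hq : 1 < q) (L : ℝ) :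
    ⌊L / log q⌋₊ * (L / 2 - log (L / log q)) ≤ log (deformedExp q (exp L)) := by
  set m := ⌊L / log q⌋₊
  have hc : 0 < log q := log_pos hq
  have hlog_nonneg : 0 ≤ log (deformedExp q (exp L)) :=
    log_nonneg (one_le_deformedExp hq.le (exp_pos L).le)
  rcases Nat.eq_zero_or_pos m with hm | hm
  · simpa [hm] using hlog_nonneg
  have hmL : (m : ℝ) ≤ L / log q := Nat.floor_le (Nat.pos_of_floor_pos hm).le
  have hterm_pos : 0 < deformedExpTerm q (exp L) m := by unfold deformedExpTerm; positivity
  calc (m : ℝ) * (L / 2 - log (L / log q))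
      ≤ m * (L / 2 - log m) := by gcongr
    _ ≤ log (deformedExpTerm q (exp L) m) :=
        le_log_deformedExpTerm_exp hq.le ((le_div_iff₀ hc).mp hmL)
    _ ≤ log (deformedExp q (exp L)) :=
        log_le_log hterm_pos (deformedExpTerm_le_deformedExp hq.le (exp_pos L).le m)

end

lemma tendsto_floor_mul_sub_log_div_sq {c : ℝ} (hc : 0 < c) :
    Tendsto (fun L => ⌊L / c⌋₊ * (L / 2 - log (L / c)) / L ^ 2) atTop (𝓝 (1 / (2 * c))) := by
  have hfloor : Tendsto (fun L => (⌊c⁻¹ * L⌋₊ : ℝ) / L) atTop (𝓝 c⁻¹) :=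
    tendsto_nat_floor_mul_div_atTop (inv_nonneg.mpr hc.le)
  have hlog : Tendsto (fun L => log (L / c) / L) atTop (𝓝 0) := by
    refine ((tendsto_pow_log_div_mul_add_atTop c 0 1 hc.ne').comp
      (tendsto_id.atTop_div_const hc)).congr' ?_
    filter_upwards with L
    simp [mul_div_cancel₀ _ hc.ne']
  have hprod := hfloor.mul ((tendsto_const_nhds (x := (1 / 2 : ℝ))).sub hlog)
  rw [sub_zero, inv_mul_eq_div, div_div] at hprod
  refine hprod.congr' ?_
  filter_upwards [eventually_gt_atTop 0] with L hL
  rw [div_eq_inv_mul L c]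
  field_simp

lemma tendsto_ceil_add_one_mul_ceil_div_sq {c : ℝ} (hc : 0 < c) :
    Tendsto (fun L => (c * ((⌈L / c⌉₊ + 1) * ⌈L / c⌉₊ / 2) + 1) / L ^ 2) atTop
      (𝓝 (1 / (2 * c))) := by
  have hceil : Tendsto (fun L => (⌈c⁻¹ * L⌉₊ : ℝ) / L) atTop (𝓝 c⁻¹) :=
    tendsto_nat_ceil_mul_div_atTop (inv_nonneg.mpr hc.le)
  have hinv : Tendsto (fun L : ℝ => L⁻¹) atTop (𝓝 0) := tendsto_inv_atTop_zero
  have hlim := (((hceil.add hinv).mul hceil).const_mul (c / 2)).add (hinv.pow 2)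
  rw [add_zero, zero_pow two_ne_zero, add_zero] at hlim
  convert hlim.congr' ?_ using 2
  · field_simp
  filter_upwards [eventually_gt_atTop 0] with L hL
  rw [div_eq_inv_mul L c]
  field_simp

lemma tendsto_log_deformedExp_exp_div_sq {q : ℝ} (hq : 1 < q) :
    Tendsto (fun L => log (deformedExp q (exp L)) / L ^ 2) atTop (𝓝 (1 / (2 * log q))) :=
  tendsto_of_tendsto_of_tendsto_of_le_of_le (tendsto_floor_mul_sub_log_div_sq (log_pos hq))
    (tendsto_ceil_add_one_mul_ceil_div_sq (log_pos hq))
    (fun L => div_le_div_of_nonneg_right (le_log_deformedExp_exp hq L) (sq_nonneg L))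
    (fun L => div_le_div_of_nonneg_right (log_deformedExp_exp_le hq L) (sq_nonneg L))

theorem tendsto_log_deformedExp_div_sq_log {q : ℝ} (hq : 1 < q) :
    Tendsto (fun x => log (deformedExp q x) / log x ^ 2) atTop (𝓝 (1 / (2 * log q))) := by
  refine ((tendsto_log_deformedExp_exp_div_sq hq).comp tendsto_log_atTop).congr' ?_
  filter_upwards [eventually_gt_atTop 0] with x hx
  simp [exp_log hx]

/-- For `f(x) = Σ_{j≥0} x^j / (j!·2^{j(j−1)/2})` one has
`(ln f(n)) / (ln n)² → 1/(2 ln 2)` as the real variable `n → ∞`. -/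
theorem log_f_div_sq_log_tendsto (f : ℝ → ℝ)
    (hf : ∀ x, f x = ∑' j : ℕ, x ^ j / ((j ! : ℝ) * 2 ^ (j * (j - 1) / 2))) :
    Tendsto (fun n : ℝ => Real.log (f n) / (Real.log n) ^ 2) atTop
      (nhds (1 / (2 * Real.log 2))) := by
  have hf' : f = deformedExp 2 := funext fun x => by
    simp [hf, deformedExp, deformedExpTerm, Nat.choose_two_right]
  rw [hf']
  exact tendsto_log_deformedExp_div_sq_log one_lt_two
end

section
/- Let F be defined by F(1) = 1 and F(m) = F(m−1) + F(⌊m/2⌋) for m ≥ 2. Then lim_{n→∞} (ln F(n)) / (ln n)² = 1/(2 ln 2). -/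
open Filter

/-!
Two steps of the recurrence give `F(2m+2) = F(2m) + F(m) + F(m+1)`, hence `F(2m) ≤ 2m·F(m)` and
`2d·F(m) ≤ F(2(m+d))`. The first bound gives `log F(2^K) ≤ K(K+1)/2 · log 2`. The second, applied
along the chain `c₀ = 2p`, `c_{k+1} = 2(c_k + ⌊c_k/p⌋)`, multiplies `F` by at least `2^(k+2)` at
step `k` while the index grows by a factor of at most `2 + 2/p`; so `log F(c_K) ≥ K²/2 · log 2`
and `log c_K ≤ K log(2 + 2/p) + O(1)`. As `log F` is monotone, bracketing `n` between consecutive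
terms of either chain squeezes `log F(n)/(log n)²` between `log 2/(2 log²(2 + 2/p)) - o(1)` and
`1/(2 log 2) + o(1)`; then let `p → ∞`.
-/

open Real Topology

lemma StrictMono.exists_le_lt_succ {c : ℕ → ℕ} (hc : StrictMono c) {K₀ n : ℕ} (hn : c K₀ ≤ n) :
    ∃ K, K₀ ≤ K ∧ c K ≤ n ∧ n < c (K + 1) := by
  have hex : ∃ K, n < c (K + 1) := ⟨n, (hc.le_apply (x := n + 1)).trans_lt' n.lt_succ_self⟩
  refine ⟨Nat.find hex, ?_, ?_, Nat.find_spec hex⟩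
  · exact Nat.lt_succ_iff.1 (hc.lt_iff_lt.1 (hn.trans_lt (Nat.find_spec hex)))
  · rcases h : Nat.find hex with _ | K
    · exact (hc.monotone K₀.zero_le).trans hn
    · exact not_lt.1 (Nat.find_min hex (h ▸ K.lt_succ_self))

section Chain

variable {f : ℕ → ℝ} (hf : Monotone f) (hf₀ : ∀ n, 0 ≤ f n) {c : ℕ → ℕ} (hc : StrictMono c)
  (hc₀ : 2 ≤ c 0)
include hf hf₀ hc hc₀

lemma eventually_lt_div_log_sq_of_chain {x : ℝ}
    (hx : ∀ᶠ K in atTop, x < f (c K) / log (c (K + 1)) ^ 2) :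
    ∀ᶠ n : ℕ in atTop, x < f n / log n ^ 2 := by
  obtain ⟨K₀, hK₀⟩ := eventually_atTop.1 hx
  filter_upwards [eventually_ge_atTop (c K₀)] with n hn
  obtain ⟨K, hK, hcK, hnK⟩ := hc.exists_le_lt_succ hn
  have hn₂ : (1 : ℝ) < n := by
    exact_mod_cast (hc₀.trans (hc.monotone K.zero_le)).trans hcK
  calc x < f (c K) / log (c (K + 1)) ^ 2 := hK₀ K hK
    _ ≤ f n / log (c (K + 1)) ^ 2 := by gcongr; exact hf hcK
    _ ≤ f n / log n ^ 2 := by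
        have := log_pos hn₂
        gcongr
        exact hf₀ n

lemma eventually_div_log_sq_lt_of_chain {x : ℝ}
    (hx : ∀ᶠ K in atTop, f (c (K + 1)) / log (c K) ^ 2 < x) :
    ∀ᶠ n : ℕ in atTop, f n / log n ^ 2 < x := by
  obtain ⟨K₀, hK₀⟩ := eventually_atTop.1 hx
  filter_upwards [eventually_ge_atTop (c K₀)] with n hn
  obtain ⟨K, hK, hcK, hnK⟩ := hc.exists_le_lt_succ hn
  have hc₂ : (1 : ℝ) < c K := by exact_mod_cast hc₀.trans (hc.monotone K.zero_le)
  calc f n / log n ^ 2 ≤ f (c (K + 1)) / log n ^ 2 := by gcongr; exact hf hnK.le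
    _ ≤ f (c (K + 1)) / log (c K) ^ 2 := by
        have := log_pos hc₂
        gcongr
        exact hf₀ _
    _ < x := hK₀ K hK

end Chain

lemma tendsto_quadratic_div_sq (a b c d e : ℝ) (hd : d ≠ 0) :
    Tendsto (fun K : ℕ => (a * K ^ 2 + b * K + c) / (d * K + e) ^ 2) atTop (𝓝 (a / d ^ 2)) := by
  have hg : Tendsto (fun t : ℝ => (a + b * t + c * t ^ 2) / (d + e * t) ^ 2) (𝓝 0)
      (𝓝 (a / d ^ 2)) := by
    have : ContinuousAt (fun t : ℝ => (a + b * t + c * t ^ 2) / (d + e * t) ^ 2) 0 := by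
      fun_prop (disch := simpa using hd)
    simpa using this.tendsto
  refine (hg.comp tendsto_inv_atTop_nhds_zero_nat).congr' ?_
  filter_upwards [eventually_ge_atTop 1] with K hK
  have hK' : (K : ℝ) ≠ 0 := by positivity
  simp only [Function.comp]
  field_simp

lemma fibKK_add_two (m : ℕ) : fibKK (m + 2) = fibKK (m + 1) + fibKK ((m + 2) / 2) := by
  rw [fibKK]

lemma fibKK_mono : Monotone fibKK := by
  refine monotone_nat_of_le_succ fun m => ?_
  rcases m with _ | m
  · simp [fibKK]
  · rw [fibKK_add_two]
    exact Nat.le_add_right _ _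

lemma one_le_fibKK {n : ℕ} (hn : 1 ≤ n) : 1 ≤ fibKK n :=
  fibKK_mono hn |>.trans' (by simp [fibKK])

lemma fibKK_two_mul_add_two {m : ℕ} (hm : 1 ≤ m) :
    fibKK (2 * m + 2) = fibKK (2 * m) + fibKK m + fibKK (m + 1) := by
  obtain ⟨k, rfl⟩ := Nat.exists_eq_add_of_le' hm
  rw [fibKK_add_two, show 2 * (k + 1) + 1 = 2 * k + 1 + 2 by ring, fibKK_add_two]
  rw [show (2 * k + 1 + 2) / 2 = k + 1 by omega, show (2 * (k + 1) + 2) / 2 = k + 1 + 1 by omega]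
  ring_nf

lemma mul_fibKK_le_fibKK_two_mul {m : ℕ} (hm : 1 ≤ m) (d : ℕ) :
    2 * d * fibKK m ≤ fibKK (2 * (m + d)) := by
  induction d with
  | zero => simp
  | succ d ih =>
    have h₁ : fibKK m ≤ fibKK (m + d) := fibKK_mono (by omega)
    have h₂ : fibKK m ≤ fibKK (m + d + 1) := fibKK_mono (by omega)
    rw [show 2 * (m + (d + 1)) = 2 * (m + d) + 2 by ring, fibKK_two_mul_add_two (by omega)]
    nlinarith

lemma fibKK_two_mul_le (m : ℕ) : fibKK (2 * m) ≤ 2 * m * fibKK m := by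
  induction m with
  | zero => simp [fibKK]
  | succ m ih =>
    rcases Nat.eq_zero_or_pos m with rfl | hm
    · simp [fibKK]
    have h : fibKK m ≤ fibKK (m + 1) := fibKK_mono (by omega)
    rw [show 2 * (m + 1) = 2 * m + 2 by ring, fibKK_two_mul_add_two hm]
    nlinarith

lemma log_fibKK_mono : Monotone fun n => log (fibKK n) := by
  refine monotone_nat_of_le_succ fun n => ?_
  rcases Nat.eq_zero_or_pos n with rfl | hn
  · simp [fibKK]
  exact log_le_log (by exact_mod_cast one_le_fibKK hn) (by exact_mod_cast fibKK_mono n.le_succ)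

lemma log_fibKK_nonneg (n : ℕ) : 0 ≤ log (fibKK n) := log_natCast_nonneg _

lemma log_fibKK_two_pow_le (K : ℕ) : log (fibKK (2 ^ K)) ≤ K * (K + 1) / 2 * log 2 := by
  induction K with
  | zero => simp [fibKK]
  | succ K ih =>
    have hF : (0 : ℝ) < fibKK (2 ^ K) := by exact_mod_cast one_le_fibKK Nat.one_le_two_pow
    have hstep : (fibKK (2 ^ (K + 1)) : ℝ) ≤ 2 ^ (K + 1) * fibKK (2 ^ K) := by
      have h := fibKK_two_mul_le (2 ^ K)
      rw [← pow_succ'] at h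
      exact_mod_cast h
    calc log (fibKK (2 ^ (K + 1)))
        ≤ log (2 ^ (K + 1) * fibKK (2 ^ K)) :=
          log_le_log (by exact_mod_cast one_le_fibKK Nat.one_le_two_pow) hstep
      _ = (K + 1) * log 2 + log (fibKK (2 ^ K)) := by
          rw [log_mul (by positivity) hF.ne', log_pow]; push_cast; ring
      _ ≤ ((K + 1 : ℕ) : ℝ) * ((K + 1 : ℕ) + 1) / 2 * log 2 := by
          push_cast; nlinarith [log_pos one_lt_two]

def lowerChain (p : ℕ) : ℕ → ℕ
  | 0 => 2 * p
  | k + 1 => 2 * (lowerChain p k + lowerChain p k / p)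

section lowerChain

variable {p : ℕ} (hp : 1 ≤ p)
include hp

lemma two_pow_succ_le_lowerChain_div (k : ℕ) : 2 ^ (k + 1) ≤ lowerChain p k / p := by
  induction k with
  | zero => simp [lowerChain, Nat.mul_div_cancel _ (show 0 < p by omega)]
  | succ k ih =>
    calc 2 ^ (k + 1 + 1) = 2 * 2 ^ (k + 1) := by ring
      _ ≤ 2 * (lowerChain p k / p) := Nat.mul_le_mul_left 2 ih
      _ ≤ 2 * lowerChain p k / p := Nat.mul_div_le_mul_div_assoc _ _ _
      _ ≤ lowerChain p (k + 1) / p := by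
          simp only [lowerChain]
          exact Nat.div_le_div_right (Nat.mul_le_mul_left 2 (Nat.le_add_right _ _))

lemma lowerChain_strictMono : StrictMono (lowerChain p) := by
  refine strictMono_nat_of_lt_succ fun k => ?_
  have := two_pow_succ_le_lowerChain_div hp k
  have := Nat.one_le_two_pow (n := k + 1)
  simp only [lowerChain]
  omega

lemma two_le_lowerChain (k : ℕ) : 2 ≤ lowerChain p k := by
  have := (lowerChain_strictMono hp).monotone k.zero_le
  simp only [lowerChain] at this
  omega

lemma two_pow_mul_fibKK_lowerChain_le (k : ℕ) :
    2 ^ (k + 2) * fibKK (lowerChain p k) ≤ fibKK (lowerChain p (k + 1)) := by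
  have hq := two_pow_succ_le_lowerChain_div hp k
  have hc := Nat.one_le_of_lt (two_le_lowerChain hp k)
  calc 2 ^ (k + 2) * fibKK (lowerChain p k)
      ≤ 2 * (lowerChain p k / p) * fibKK (lowerChain p k) := by
        gcongr; rw [pow_succ']; omega
    _ ≤ fibKK (lowerChain p (k + 1)) := mul_fibKK_le_fibKK_two_mul hc _


lemma log_fibKK_lowerChain_ge (k : ℕ) : k ^ 2 / 2 * log 2 ≤ log (fibKK (lowerChain p k)) := by
  induction k with
  | zero => simpa using log_natCast_nonneg _
  | succ k ih =>
    have hF : (0 : ℝ) < fibKK (lowerChain p k) := by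
      exact_mod_cast one_le_fibKK (Nat.one_le_of_lt (two_le_lowerChain hp k))
    have hstep : (2 : ℝ) ^ (k + 2) * fibKK (lowerChain p k) ≤ fibKK (lowerChain p (k + 1)) := by
      exact_mod_cast two_pow_mul_fibKK_lowerChain_le hp k
    calc ((k + 1 : ℕ) : ℝ) ^ 2 / 2 * log 2
        ≤ (k + 2) * log 2 + log (fibKK (lowerChain p k)) := by
          push_cast; nlinarith [log_pos one_lt_two]
      _ = log ((2 : ℝ) ^ (k + 2) * fibKK (lowerChain p k)) := by
          rw [log_mul (by positivity) hF.ne', log_pow]; push_cast; ring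
      _ ≤ log (fibKK (lowerChain p (k + 1))) := log_le_log (by positivity) hstep

lemma log_lowerChain_le (k : ℕ) : log (lowerChain p k) ≤ log (2 * p) + k * log (2 + 2 / p) := by
  induction k with
  | zero => simp [lowerChain]
  | succ k ih =>
    have hc : (0 : ℝ) < lowerChain p k := by
      exact_mod_cast two_pos.trans_le (two_le_lowerChain hp k)
    have hstep : (lowerChain p (k + 1) : ℝ) ≤ (2 + 2 / p) * lowerChain p k := by
      have : ((lowerChain p k / p : ℕ) : ℝ) ≤ lowerChain p k / p := Nat.cast_div_le
      simp only [lowerChain]; push_cast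
      rw [add_mul, div_mul_eq_mul_div, mul_div_assoc]; linarith
    have hc' : (0 : ℝ) < lowerChain p (k + 1) := by
      exact_mod_cast two_pos.trans_le (two_le_lowerChain hp (k + 1))
    calc log (lowerChain p (k + 1))
        ≤ log ((2 + 2 / p) * lowerChain p k) := log_le_log hc' hstep
      _ = log (2 + 2 / p) + log (lowerChain p k) := log_mul (by positivity) hc.ne'
      _ ≤ log (2 * p) + ((k + 1 : ℕ) : ℝ) * log (2 + 2 / p) := by push_cast; linarith

end lowerChain

lemma eventually_lt_log_fibKK_div_sq_log {x : ℝ} (hx : x < 1 / (2 * log 2)) :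
    ∀ᶠ n : ℕ in atTop, x < log (fibKK n) / log n ^ 2 := by
  have hlim : Tendsto (fun p : ℕ => log 2 / 2 / log (2 + 2 / p) ^ 2) atTop
      (𝓝 (1 / (2 * log 2))) := by
    have hℓ : Tendsto (fun p : ℕ => log (2 + 2 / (p : ℝ))) atTop (𝓝 (log 2)) := by
      simpa using (tendsto_const_nhds.add (tendsto_const_div_atTop_nhds_zero_nat (2 : ℝ))).log
        (by norm_num : (2 : ℝ) + 0 ≠ 0)
    rw [show 1 / (2 * log 2) = log 2 / 2 / log 2 ^ 2 by field_simp]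
    exact tendsto_const_nhds.div (hℓ.pow 2) (by positivity)
  obtain ⟨p, hpx, hp⟩ := ((hlim.eventually (lt_mem_nhds hx)).and (eventually_ge_atTop 1)).exists
  set ℓ := log (2 + 2 / (p : ℝ))
  have hℓ : 0 < ℓ := by
    have : (0 : ℝ) ≤ 2 / p := by positivity
    exact log_pos (by linarith)
  have hK := tendsto_quadratic_div_sq (log 2 / 2) 0 0 ℓ (log (2 * p) + ℓ) hℓ.ne'
  refine eventually_lt_div_log_sq_of_chain log_fibKK_mono log_fibKK_nonneg
    (lowerChain_strictMono hp) (two_le_lowerChain hp 0) ?_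
  filter_upwards [hK.eventually (lt_mem_nhds hpx)] with K hxK
  have hc : (1 : ℝ) < lowerChain p (K + 1) := by exact_mod_cast two_le_lowerChain hp (K + 1)
  have hlog := log_lowerChain_le hp (K + 1)
  push_cast at hlog
  calc x < _ := hxK
    _ ≤ log (fibKK (lowerChain p K)) / log (lowerChain p (K + 1)) ^ 2 := by
      refine div_le_div₀ (log_fibKK_nonneg _) (by linarith [log_fibKK_lowerChain_ge hp K])
        (pow_pos (log_pos hc) 2) (pow_le_pow_left₀ (log_pos hc).le (by linarith) 2)

lemma eventually_log_fibKK_div_sq_log_lt {x : ℝ} (hx : 1 / (2 * log 2) < x) :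
    ∀ᶠ n : ℕ in atTop, log (fibKK n) / log n ^ 2 < x := by
  have hlog₂ := log_pos one_lt_two
  have hK := tendsto_quadratic_div_sq (log 2 / 2) (5 * log 2 / 2) (3 * log 2) (log 2) (log 2)
    hlog₂.ne'
  rw [show log 2 / 2 / log 2 ^ 2 = 1 / (2 * log 2) by field_simp] at hK
  refine eventually_div_log_sq_lt_of_chain (c := fun K => 2 ^ (K + 1)) log_fibKK_mono
    log_fibKK_nonneg (fun _ _ h => Nat.pow_lt_pow_right one_lt_two (by omega)) le_rfl ?_
  filter_upwards [hK.eventually (gt_mem_nhds hx)] with K hxK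
  have hF := log_fibKK_two_pow_le (K + 2)
  push_cast at hF
  calc log (fibKK (2 ^ (K + 2))) / log ((2 ^ (K + 1) : ℕ) : ℝ) ^ 2
      ≤ (K + 2) * (K + 3) / 2 * log 2 / ((K + 1) * log 2) ^ 2 := by
        rw [Nat.cast_pow, log_pow]
        push_cast
        gcongr
        linarith
    _ = (log 2 / 2 * K ^ 2 + 5 * log 2 / 2 * K + 3 * log 2) / (log 2 * K + log 2) ^ 2 := by ring
    _ < x := hxK

/-- For the Fibonacci-like sequence A033485 one has
`(ln F(n)) / (ln n)² → 1/(2 ln 2)` as `n → ∞`. -/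
theorem log_fibKK_div_sq_log_tendsto :
    Tendsto (fun n : ℕ => Real.log (fibKK n) / (Real.log n) ^ 2) atTop
      (nhds (1 / (2 * Real.log 2))) :=
  tendsto_order.2 ⟨fun _ => eventually_lt_log_fibKK_div_sq_log,
    fun _ => eventually_log_fibKK_div_sq_log_lt⟩
end
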